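/- arXiv:2302.10796 — 2 statements merged into one kernel-verified Lean document; each statement's English description precedes it below -/
import Mathlib

section
/- Let a_1, a_2, ..., a_K be a sequence in [0,1] and define S_k = Σ_{j<k} a_j with S_1 = 0. Then Σ_{k=1}^K a_k / max(1, S_k) ≤ 2(1 + log(1 + Σ_{j=1}^K a_j)). -/
/-!
Use the potential `Φ(S) = min S 2 + 2 log (max 1 S)`. Adding an increment `a ∈ [0, 1]` to a
running sum `S` raises `Φ` by at least `a / max 1 S`: while `S < 1` the linear part pays for
it exactly (as `S + a < 2`), and once `S ≥ 1` the logarithm does, since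
`2 log (1 + x) ≥ x` on `[0, 1]`. Telescoping, the sum is at most `Φ(S_K) ≤ 2 + 2 log (1 + S_K)`.
-/

namespace PotentialLogBound

lemma le_two_mul_log_one_add {x : ℝ} (hx₀ : 0 ≤ x) (hx₁ : x ≤ 1) :
    x ≤ 2 * Real.log (1 + x) := by
  have hlog : 1 - (1 + x)⁻¹ ≤ Real.log (1 + x) := Real.one_sub_inv_le_log_of_pos (by linarith)
  have hfrac : 1 - (1 + x)⁻¹ = x / (1 + x) := by field_simp; ring
  have hhalf : x / 2 ≤ x / (1 + x) := div_le_div_of_nonneg_left hx₀ (by linarith) (by linarith)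
  linarith

noncomputable def potential (S : ℝ) : ℝ := min S 2 + 2 * Real.log (max 1 S)

lemma potential_zero : potential 0 = 0 := by
  simp [potential]

lemma potential_le {S : ℝ} (hS : 0 ≤ S) : potential S ≤ 2 * (1 + Real.log (1 + S)) := by
  have hlog : Real.log (max 1 S) ≤ Real.log (1 + S) :=
    Real.log_le_log (by positivity) (max_le (by linarith) (by linarith))
  have hmin : min S 2 ≤ 2 := min_le_right S 2
  unfold potential
  linarith

lemma div_max_one_le_potential_sub {a S : ℝ} (ha₀ : 0 ≤ a) (ha₁ : a ≤ 1) :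
    a / max 1 S ≤ potential (S + a) - potential S := by
  unfold potential
  rcases le_or_gt 1 S with hS₁ | hS₁
  · have hSpos : 0 < S := by linarith
    have hsplit : Real.log (S + a) = Real.log S + Real.log (1 + a / S) := by
      rw [← Real.log_mul hSpos.ne' (by positivity)]
      congr 1
      field_simp
    have hlog : a / S ≤ 2 * Real.log (1 + a / S) :=
      le_two_mul_log_one_add (by positivity) ((div_le_one hSpos).mpr (by linarith))
    have hmin : min S 2 ≤ min (S + a) 2 := min_le_min_right 2 (by linarith)
    rw [max_eq_right hS₁, max_eq_right (by linarith : 1 ≤ S + a), hsplit]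
    linarith
  · have hlog : 0 ≤ Real.log (max 1 (S + a)) := Real.log_nonneg (le_max_left 1 _)
    rw [max_eq_left hS₁.le, min_eq_left (by linarith : S ≤ 2),
      min_eq_left (by linarith : S + a ≤ 2), div_one, Real.log_one]
    linarith

lemma sum_div_max_one_le_potential (K : ℕ) (a : ℕ → ℝ) (ha : ∀ j, 0 ≤ a j ∧ a j ≤ 1) :
    ∑ k ∈ Finset.range K, a k / max 1 (∑ j ∈ Finset.range k, a j) ≤
      potential (∑ j ∈ Finset.range K, a j) := by
  let S : ℕ → ℝ := fun k => ∑ j ∈ Finset.range k, a j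
  calc ∑ k ∈ Finset.range K, a k / max 1 (S k)
      ≤ ∑ k ∈ Finset.range K, (potential (S (k + 1)) - potential (S k)) := by
        refine Finset.sum_le_sum fun k _ => ?_
        rw [show S (k + 1) = S k + a k from Finset.sum_range_succ a k]
        exact div_max_one_le_potential_sub (ha k).1 (ha k).2
    _ = potential (S K) := by
        rw [Finset.sum_range_sub (fun k => potential (S k)), show S 0 = 0 from Finset.sum_range_zero a, potential_zero,
          sub_zero]

end PotentialLogBound

open PotentialLogBound in
theorem potential_log_bound (K : ℕ) (a : ℕ → ℝ) (ha : ∀ j, 0 ≤ a j ∧ a j ≤ 1) :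
    ∑ k ∈ Finset.range K, a k / max 1 (∑ j ∈ Finset.range k, a j) ≤
      2 * (1 + Real.log (1 + ∑ j ∈ Finset.range K, a j)) :=
  (sum_div_max_one_le_potential K a ha).trans
    (potential_le (Finset.sum_nonneg fun j _ => (ha j).1))
end

section
/- Let φ, φ̂ ∈ R^d with ||φ̂ - φ||_2 ≤ 2^{-(n_0+1)}, and let Λ ⪰ I_d be positive definite. If ||φ̂'||_{Λ^{-1}} ≥ 2^{-(n_0-1)} for some φ̂' with ||φ̂' - φ||_2 ≤ 2^{-n_0}, then ||φ̂ - φ||_2 ≤ ||φ̂||_{Λ^{-1}}. -/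
open Matrix

noncomputable def euclNorm {d : ℕ} (v : Fin d → ℝ) : ℝ := Real.sqrt (v ⬝ᵥ v)

noncomputable def wnorm {d : ℕ} (A : Matrix (Fin d) (Fin d) ℝ) (v : Fin d → ℝ) : ℝ :=
  Real.sqrt (v ⬝ᵥ A *ᵥ v)

/-!
Put `ε = 2^{-(n₀+1)}`. Since `Λ ⪰ 1`, the `Λ⁻¹`-norm is a seminorm dominated by the Euclidean
norm, so `4ε ≤ ‖φ̂'‖_{Λ⁻¹} ≤ ‖φ̂' - φ̂‖₂ + ‖φ̂‖_{Λ⁻¹} ≤ 3ε + ‖φ̂‖_{Λ⁻¹}`, and therefore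
`‖φ̂ - φ‖₂ ≤ ε ≤ ‖φ̂‖_{Λ⁻¹}`.
-/

section euclNorm

variable {d : ℕ}

lemma euclNorm_eq_norm (v : Fin d → ℝ) : euclNorm v = ‖WithLp.toLp 2 v‖ := by
  simp [euclNorm, EuclideanSpace.norm_eq, dotProduct, sq]

lemma euclNorm_add_le (u v : Fin d → ℝ) : euclNorm (u + v) ≤ euclNorm u + euclNorm v := by
  simpa only [euclNorm_eq_norm, WithLp.toLp_add] using norm_add_le _ _

lemma euclNorm_sub_le_sub_add_sub (u v w : Fin d → ℝ) :
    euclNorm (u - w) ≤ euclNorm (u - v) + euclNorm (v - w) := by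
  simpa only [euclNorm_eq_norm, WithLp.toLp_sub] using norm_sub_le_norm_sub_add_norm_sub _ _ _

lemma euclNorm_sub_comm (u v : Fin d → ℝ) : euclNorm (u - v) = euclNorm (v - u) := by
  simpa only [euclNorm_eq_norm, WithLp.toLp_sub] using norm_sub_rev _ _

end euclNorm

section Loewner

variable {n : Type*} [DecidableEq n] {Λ : Matrix n n ℝ}

lemma posDef_of_posSemidef_sub_one (hΛ : (Λ - 1).PosSemidef) : Λ.PosDef :=
  sub_add_cancel Λ 1 ▸ PosDef.posSemidef_add hΛ PosDef.one

variable [Fintype n]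

-- With `w = Λ⁻¹ v`, `Λ ⪰ 1` gives `w ⬝ w ≤ v ⬝ w`,
-- and then `0 ≤ (v - w) ⬝ (v - w)` gives `v ⬝ w ≤ v ⬝ v`.
lemma dotProduct_inv_mulVec_le (hΛ : (Λ - 1).PosSemidef) (v : n → ℝ) :
    v ⬝ᵥ Λ⁻¹ *ᵥ v ≤ v ⬝ᵥ v := by
  set w := Λ⁻¹ *ᵥ v
  have hΛw : Λ *ᵥ w = v := by
    have hdet : IsUnit Λ.det := (isUnit_iff_isUnit_det Λ).mp (posDef_of_posSemidef_sub_one hΛ).isUnit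
    rw [mulVec_mulVec, mul_nonsing_inv _ hdet, one_mulVec]
  have hww : w ⬝ᵥ w ≤ v ⬝ᵥ w := by
    have := hΛ.dotProduct_mulVec_nonneg w
    rw [star_trivial, sub_mulVec, one_mulVec, dotProduct_sub, hΛw, dotProduct_comm w v] at this
    linarith
  have hvw : 0 ≤ (v - w) ⬝ᵥ (v - w) := by simpa using dotProduct_star_self_nonneg (v - w)
  simp only [sub_dotProduct, dotProduct_sub, dotProduct_comm w v] at hvw
  linarith

end Loewner

section wnorm

variable {d : ℕ} {A : Matrix (Fin d) (Fin d) ℝ}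

lemma wnorm_inv_le_euclNorm (hA : (A - 1).PosSemidef) (v : Fin d → ℝ) :
    wnorm A⁻¹ v ≤ euclNorm v :=
  Real.sqrt_le_sqrt (dotProduct_inv_mulVec_le hA v)

lemma wnorm_conjTranspose_mul_self (B : Matrix (Fin d) (Fin d) ℝ) (v : Fin d → ℝ) :
    wnorm (Bᴴ * B) v = euclNorm (B *ᵥ v) := by
  rw [wnorm, euclNorm, ← mulVec_mulVec, dotProduct_mulVec, conjTranspose_eq_transpose_of_trivial,
    vecMul_transpose]

open scoped MatrixOrder in
lemma wnorm_add_le (hA : A.PosSemidef) (u v : Fin d → ℝ) :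
    wnorm A (u + v) ≤ wnorm A u + wnorm A v := by
  obtain ⟨B, rfl⟩ := CStarAlgebra.nonneg_iff_eq_star_mul_self.mp hA.nonneg
  simp only [star_eq_conjTranspose, wnorm_conjTranspose_mul_self, mulVec_add]
  exact euclNorm_add_le _ _

end wnorm

theorem feature_estimation_termination_general {d : ℕ} (n₀ : ℕ) (φ φhat φhat' : Fin d → ℝ)
    (Λ : Matrix (Fin d) (Fin d) ℝ) (hΛ1 : (Λ - 1).PosSemidef)
    (h1 : euclNorm (φhat - φ) ≤ (2 : ℝ) ^ (-((n₀ : ℤ) + 1)))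
    (h2 : (2 : ℝ) ^ (-((n₀ : ℤ) - 1)) ≤ wnorm Λ⁻¹ φhat')
    (h3 : euclNorm (φhat' - φ) ≤ (2 : ℝ) ^ (-(n₀ : ℤ))) :
    euclNorm (φhat - φ) ≤ wnorm Λ⁻¹ φhat := by
  set ε : ℝ := 2 ^ (-((n₀ : ℤ) + 1))
  have h2ε : (2 : ℝ) ^ (-(n₀ : ℤ)) = 2 * ε := by
    rw [← zpow_one_add₀ two_ne_zero]; ring_nf
  have h4ε : (2 : ℝ) ^ (-((n₀ : ℤ) - 1)) = 2 ^ 2 * ε := by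
    rw [← zpow_natCast, ← zpow_add₀ two_ne_zero]; ring_nf
  have hΛinv : Λ⁻¹.PosSemidef := (posDef_of_posSemidef_sub_one hΛ1).inv.posSemidef
  have h_shift : wnorm Λ⁻¹ φhat' ≤ euclNorm (φhat' - φ) + euclNorm (φhat - φ) + wnorm Λ⁻¹ φhat :=
    calc wnorm Λ⁻¹ φhat'
        ≤ wnorm Λ⁻¹ (φhat' - φhat) + wnorm Λ⁻¹ φhat := by
          simpa only [sub_add_cancel] using wnorm_add_le hΛinv (φhat' - φhat) φhat
      _ ≤ euclNorm (φhat' - φhat) + wnorm Λ⁻¹ φhat := by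
          gcongr; exact wnorm_inv_le_euclNorm hΛ1 _
      _ ≤ euclNorm (φhat' - φ) + euclNorm (φhat - φ) + wnorm Λ⁻¹ φhat := by
          gcongr
          rw [euclNorm_sub_comm φhat φ]
          exact euclNorm_sub_le_sub_add_sub _ _ _
  linarith

theorem feature_estimation_termination {d : ℕ} (n₀ : ℕ) (φ φhat φhat' : Fin d → ℝ)
    (Λ : Matrix (Fin d) (Fin d) ℝ) (hΛ : Λ.PosDef) (hΛ1 : (Λ - 1).PosSemidef)
    (h1 : euclNorm (φhat - φ) ≤ (2 : ℝ) ^ (-((n₀ : ℤ) + 1)))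
    (h2 : (2 : ℝ) ^ (-((n₀ : ℤ) - 1)) ≤ wnorm Λ⁻¹ φhat')
    (h3 : euclNorm (φhat' - φ) ≤ (2 : ℝ) ^ (-(n₀ : ℤ))) :
    euclNorm (φhat - φ) ≤ wnorm Λ⁻¹ φhat :=
  feature_estimation_termination_general n₀ φ φhat φhat' Λ hΛ1 h1 h2 h3
end
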